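/- Let 1 < α < 2 and let a be the sequence a_n = |n|^α for n ∈ ℤ. Let b : ℤ → ℝ be a symmetric sequence (b_{-n} = b_n) satisfying ∑_{j≥1} j^α |b_j| < ∞. Then S_b := ∑_{j∈ℤ} b_j converges, the convolution c_n := ∑_{j∈ℤ} a_j b_{n-j} converges for every n ∈ ℤ, c is symmetric, and c_n − S_b·|n|^α → 0 as n → ∞. -/

import Mathlib

/-!
By symmetry of `b`, `c_n - S_b n^α = ½ ∑_k (|n - k|^α + |n + k|^α - 2 n^α) b_k`. For `1 ≤ α ≤ 2`
and `m ≥ 0` the second difference `|m - x|^α + |m + x|^α - 2 m^α` lies between `0` and `C |x|^α`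
(convexity of `t ↦ t^α`, subadditivity of `t ↦ t^(α-1)`), and for fixed `x` it is
`O(x² (m - x)^(α-2))`, which tends to `0` because `α < 2`. Dominated convergence with the summable
majorant `C |k|^α |b_k|` finishes the proof.
-/

open Filter Real Topology

lemma rpow_add_mul_sub_le_rpow {p : ℝ} (hp : 1 ≤ p) {x y : ℝ} (hx : 0 < x) (hy : 0 ≤ y) :
    x ^ p + p * x ^ (p - 1) * (y - x) ≤ y ^ p := by
  have h := one_add_mul_self_le_rpow_one_add (s := (y - x) / x)
    (by rw [le_div_iff₀ hx]; linarith) hp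
  rw [show 1 + (y - x) / x = y / x by field_simp; ring, div_rpow hy hx.le,
    le_div_iff₀ (rpow_pos_of_pos hx p)] at h
  calc x ^ p + p * x ^ (p - 1) * (y - x) = (1 + p * ((y - x) / x)) * x ^ p := by
        rw [rpow_sub_one hx.ne']; ring
    _ ≤ y ^ p := h

lemma rpow_le_rpow_add_mul_sub {p : ℝ} (hp0 : 0 ≤ p) (hp1 : p ≤ 1) {x y : ℝ} (hx : 0 < x)
    (hy : 0 ≤ y) : y ^ p ≤ x ^ p + p * x ^ (p - 1) * (y - x) := by
  have h := rpow_one_add_le_one_add_mul_self (s := (y - x) / x) (by rw [le_div_iff₀ hx]; linarith)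
    hp0 hp1
  rw [show 1 + (y - x) / x = y / x by field_simp; ring, div_rpow hy hx.le,
    div_le_iff₀ (rpow_pos_of_pos hx p)] at h
  calc y ^ p ≤ (1 + p * ((y - x) / x)) * x ^ p := h
    _ = x ^ p + p * x ^ (p - 1) * (y - x) := by rw [rpow_sub_one hx.ne']; ring

lemma add_rpow_le_two_rpow_mul_add_rpow {p : ℝ} (hp : 0 ≤ p) {x y : ℝ} (hx : 0 ≤ x) (hy : 0 ≤ y) :
    (x + y) ^ p ≤ 2 ^ p * (x ^ p + y ^ p) := by
  calc (x + y) ^ p ≤ (2 * max x y) ^ p :=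
        rpow_le_rpow (by positivity) (by linarith [le_max_left x y, le_max_right x y]) hp
    _ = 2 ^ p * max x y ^ p := mul_rpow zero_le_two (le_max_of_le_left hx)
    _ ≤ 2 ^ p * (x ^ p + y ^ p) := by
        gcongr
        rcases le_total x y with h | h <;> simp [h, rpow_nonneg, hx, hy]

noncomputable def rpowSecondDiff (α m x : ℝ) : ℝ := |m - x| ^ α + |m + x| ^ α - 2 * m ^ α

lemma rpowSecondDiff_abs (α m x : ℝ) : rpowSecondDiff α m |x| = rpowSecondDiff α m x := by
  rcases abs_cases x with ⟨h, -⟩ | ⟨h, -⟩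
  · rw [h]
  · rw [h, rpowSecondDiff, rpowSecondDiff, sub_neg_eq_add, ← sub_eq_add_neg,
      add_comm (|m + x| ^ α)]

lemma rpowSecondDiff_nonneg {α : ℝ} (hα : 1 ≤ α) {m : ℝ} (hm : 0 ≤ m) (x : ℝ) :
    0 ≤ rpowSecondDiff α m x := by
  unfold rpowSecondDiff
  rcases hm.eq_or_lt with rfl | hm
  · simp only [zero_sub, zero_add, abs_neg, zero_rpow (by positivity : α ≠ 0), mul_zero, sub_zero]
    positivity
  have h₁ := rpow_add_mul_sub_le_rpow hα hm (abs_nonneg (m - x))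
  have h₂ := rpow_add_mul_sub_le_rpow hα hm (abs_nonneg (m + x))
  have hsum : 0 ≤ |m - x| - m + (|m + x| - m) := by
    linarith [le_abs_self (m - x), le_abs_self (m + x)]
  nlinarith [mul_nonneg (by positivity : 0 ≤ α * m ^ (α - 1)) hsum]

lemma rpowSecondDiff_le_of_lt {α : ℝ} (hα : 1 ≤ α) {m x : ℝ} (hx : 0 ≤ x) (hxm : x < m) :
    rpowSecondDiff α m x ≤ α * x * ((m + x) ^ (α - 1) - (m - x) ^ (α - 1)) := by
  rw [rpowSecondDiff, abs_of_pos (by linarith : 0 < m - x), abs_of_pos (by linarith : 0 < m + x)]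
  have h₁ := rpow_add_mul_sub_le_rpow hα (by linarith : 0 < m + x) (by linarith : 0 ≤ m)
  have h₂ := rpow_add_mul_sub_le_rpow hα (by linarith : 0 < m - x) (by linarith : 0 ≤ m)
  nlinarith

lemma rpowSecondDiff_le {α : ℝ} (hα₁ : 1 ≤ α) (hα₂ : α ≤ 2) {m : ℝ} (hm : 0 ≤ m) (x : ℝ) :
    rpowSecondDiff α m x ≤ (1 + 2 ^ α + α * 2 ^ (α - 1)) * |x| ^ α := by
  rw [← rpowSecondDiff_abs]
  have hy := abs_nonneg x
  generalize |x| = y at hy ⊢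
  have hyα : 0 ≤ y ^ α := by positivity
  have hα2y : 0 ≤ α * 2 ^ (α - 1) * y ^ α := by positivity
  rcases lt_or_ge y m with hym | hmy
  · have h₁ := rpowSecondDiff_le_of_lt hα₁ hy hym
    have h₂ : (m + y) ^ (α - 1) ≤ (m - y) ^ (α - 1) + (2 * y) ^ (α - 1) := by
      convert rpow_add_le_add_rpow (by linarith : 0 ≤ m - y) (by linarith : 0 ≤ 2 * y)
        (by linarith : 0 ≤ α - 1) (by linarith : α - 1 ≤ 1) using 2
      ring
    calc rpowSecondDiff α m y ≤ α * y * ((m + y) ^ (α - 1) - (m - y) ^ (α - 1)) := h₁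
      _ ≤ α * y * (2 * y) ^ (α - 1) := by gcongr; linarith
      _ = α * 2 ^ (α - 1) * y ^ α := by
        have : y ^ α = y ^ (α - 1) * y := by
          rw [← rpow_add_one' hy (by linarith), sub_add_cancel]
        rw [mul_rpow zero_le_two hy, this]
        ring
      _ ≤ _ := by nlinarith [rpow_nonneg zero_le_two α]
  · have h₁ : |m - y| ^ α ≤ y ^ α :=
      rpow_le_rpow (abs_nonneg _) (by rw [abs_sub_comm, abs_of_nonneg (by linarith)]; linarith)
        (by linarith)
    have h₂ : |m + y| ^ α ≤ 2 ^ α * y ^ α := by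
      rw [← mul_rpow zero_le_two hy]
      exact rpow_le_rpow (abs_nonneg _) (by rw [abs_of_nonneg (by linarith)]; linarith)
        (by linarith)
    have h₃ : 0 ≤ m ^ α := by positivity
    rw [rpowSecondDiff]
    nlinarith

lemma tendsto_rpowSecondDiff_atTop {α : ℝ} (hα₁ : 1 ≤ α) (hα₂ : α < 2) (x : ℝ) :
    Tendsto (rpowSecondDiff α · x) atTop (𝓝 0) := by
  simp_rw [← rpowSecondDiff_abs α _ x]
  have hy := abs_nonneg x
  generalize |x| = y at hy ⊢
  have hlim : Tendsto (fun m : ℝ => 2 * α * (α - 1) * y ^ 2 * (m - y) ^ (α - 2)) atTop (𝓝 0) := by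
    have := (tendsto_rpow_neg_atTop (by linarith : 0 < 2 - α)).comp
      (tendsto_atTop_add_const_right atTop (-y) tendsto_id)
    simpa [neg_sub, Function.comp_def, ← sub_eq_add_neg] using
      this.const_mul (2 * α * (α - 1) * y ^ 2)
  refine tendsto_of_tendsto_of_tendsto_of_le_of_le' tendsto_const_nhds hlim
    ((eventually_ge_atTop 0).mono fun m hm => rpowSecondDiff_nonneg hα₁ hm y) ?_
  filter_upwards [eventually_gt_atTop y] with m hym
  have h₁ := rpowSecondDiff_le_of_lt hα₁ hy hym
  have h₂ := rpow_le_rpow_add_mul_sub (by linarith : 0 ≤ α - 1) (by linarith : α - 1 ≤ 1)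
    (by linarith : 0 < m - y) (by linarith : 0 ≤ m + y)
  rw [show α - 1 - 1 = α - 2 by ring] at h₂
  nlinarith [mul_le_mul_of_nonneg_left h₂ (by positivity : 0 ≤ α * y)]

section Series

variable {α : ℝ} {b : ℤ → ℝ}

lemma summable_abs_of_summable_abs_rpow_mul (hα : 0 ≤ α)
    (h : Summable fun k : ℤ => |(k : ℝ)| ^ α * |b k|) : Summable fun k => |b k| := by
  refine .of_norm_bounded_eventually h ((eventually_cofinite_ne 0).mono fun k hk => ?_)
  rw [norm_abs_eq_norm, Real.norm_eq_abs]
  refine le_mul_of_one_le_left (abs_nonneg _) (one_le_rpow ?_ hα)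
  exact_mod_cast Int.one_le_abs hk

lemma summable_abs_sub_rpow_mul (hα : 0 ≤ α) (h : Summable fun k : ℤ => |(k : ℝ)| ^ α * |b k|)
    (r : ℝ) : Summable fun k : ℤ => |r - k| ^ α * b k := by
  refine .of_norm_bounded
    (((summable_abs_of_summable_abs_rpow_mul hα h).mul_left (2 ^ α * |r| ^ α)).add
      (h.mul_left (2 ^ α))) fun k => ?_
  rw [Real.norm_eq_abs, abs_mul, abs_of_nonneg (by positivity)]
  calc |r - k| ^ α * |b k| ≤ 2 ^ α * (|r| ^ α + |(k : ℝ)| ^ α) * |b k| := by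
        gcongr
        exact (rpow_le_rpow (abs_nonneg _) (abs_sub _ _) hα).trans
          (add_rpow_le_two_rpow_mul_add_rpow hα (abs_nonneg _) (abs_nonneg _))
    _ = _ := by ring

lemma hasSum_rpowSecondDiff_mul (hα : 0 ≤ α) (hb : ∀ n, b (-n) = b n)
    (h : Summable fun k : ℤ => |(k : ℝ)| ^ α * |b k|) (r : ℝ) :
    HasSum (fun k : ℤ => rpowSecondDiff α r k * b k)
      (2 * ((∑' k : ℤ, |r - k| ^ α * b k) - (∑' k, b k) * r ^ α)) := by
  have hminus := (summable_abs_sub_rpow_mul hα h r).hasSum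
  have hplus : HasSum (fun k : ℤ => |r + k| ^ α * b k) (∑' k : ℤ, |r - k| ^ α * b k) := by
    rw [← (Equiv.neg ℤ).hasSum_iff] at hminus
    convert hminus using 2 with k
    simp [hb]
  have hS := (summable_abs_of_summable_abs_rpow_mul hα h).of_abs.hasSum
  have hsplit : (fun k : ℤ => rpowSecondDiff α r k * b k) =
      fun k : ℤ => |r - k| ^ α * b k + |r + k| ^ α * b k - 2 * r ^ α * b k := by
    funext k; rw [rpowSecondDiff]; ring
  have hvalue : 2 * ((∑' k : ℤ, |r - k| ^ α * b k) - (∑' k, b k) * r ^ α) =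
      (∑' k : ℤ, |r - k| ^ α * b k) + (∑' k : ℤ, |r - k| ^ α * b k) - 2 * r ^ α * ∑' k, b k := by
    ring
  rw [hsplit, hvalue]
  exact (hminus.add hplus).sub (hS.mul_left _)

lemma tendsto_tsum_abs_sub_rpow_mul_sub (hα₁ : 1 ≤ α) (hα₂ : α < 2) (hb : ∀ n, b (-n) = b n)
    (h : Summable fun k : ℤ => |(k : ℝ)| ^ α * |b k|) :
    Tendsto (fun r : ℝ => (∑' k : ℤ, |r - k| ^ α * b k) - (∑' k, b k) * r ^ α) atTop (𝓝 0) := by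
  have hα : 0 ≤ α := by linarith
  have hbound : ∀ᶠ r in atTop, ∀ k : ℤ,
      ‖rpowSecondDiff α r k * b k‖ ≤ (1 + 2 ^ α + α * 2 ^ (α - 1)) * (|(k : ℝ)| ^ α * |b k|) := by
    filter_upwards [eventually_ge_atTop 0] with r hr k
    rw [norm_mul, Real.norm_eq_abs, Real.norm_eq_abs,
      abs_of_nonneg (rpowSecondDiff_nonneg hα₁ hr k), ← mul_assoc]
    exact mul_le_mul_of_nonneg_right (rpowSecondDiff_le hα₁ hα₂.le hr k) (abs_nonneg _)
  have hlim : Tendsto (fun r : ℝ => ∑' k : ℤ, rpowSecondDiff α r k * b k) atTop (𝓝 0) := by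
    simpa using tendsto_tsum_of_dominated_convergence (h.mul_left _)
      (fun k => (tendsto_rpowSecondDiff_atTop hα₁ hα₂ k).mul_const (b k)) hbound
  rw [← zero_div 2]
  refine (hlim.div_const 2).congr fun r => ?_
  rw [(hasSum_rpowSecondDiff_mul hα hb h r).tsum_eq]
  ring

end Series

theorem stmt2 (α : ℝ) (hα1 : 1 < α) (hα2 : α < 2) (b : ℤ → ℝ)
    (hbsym : ∀ n : ℤ, b (-n) = b n)
    (hbsum : Summable (fun j : ℕ => (j : ℝ) ^ α * |b j|)) :
    Summable b ∧
    (∀ n : ℤ, Summable (fun j : ℤ => |(j : ℝ)| ^ α * b (n - j))) ∧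
    (∀ n : ℤ, (∑' j : ℤ, |(j : ℝ)| ^ α * b (-n - j)) = ∑' j : ℤ, |(j : ℝ)| ^ α * b (n - j)) ∧
    Tendsto (fun n : ℕ =>
        (∑' j : ℤ, |(j : ℝ)| ^ α * b ((n : ℤ) - j)) - (∑' j : ℤ, b j) * (n : ℝ) ^ α)
      atTop (nhds 0) := by
  have hα : 0 ≤ α := by linarith
  have h : Summable fun k : ℤ => |(k : ℝ)| ^ α * |b k| :=
    .of_nat_of_neg (hbsum.congr fun j => by simp) (hbsum.congr fun j => by simp [hbsym])
  have hconv (n : ℤ) : HasSum (fun j : ℤ => |(j : ℝ)| ^ α * b (n - j))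
      (∑' k : ℤ, |(n : ℝ) - k| ^ α * b k) := by
    rw [← (Equiv.subLeft n).hasSum_iff]
    convert (summable_abs_sub_rpow_mul hα h n).hasSum using 2 with k
    simp
  refine ⟨(summable_abs_of_summable_abs_rpow_mul hα h).of_abs, fun n => (hconv n).summable,
    fun n => ?_, ?_⟩
  · rw [← (Equiv.neg ℤ).tsum_eq]
    refine tsum_congr fun j => ?_
    rw [Equiv.neg_apply, Int.cast_neg, abs_neg, show -n - -j = -(n - j) by ring, hbsym]
  · refine ((tendsto_tsum_abs_sub_rpow_mul_sub hα1.le hα2 hbsym h).comp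
      tendsto_natCast_atTop_atTop).congr fun n => ?_
    rw [(hconv n).tsum_eq, Function.comp_apply, Int.cast_natCast]
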